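/- arXiv:2406.03053 — 3 statements merged into one kernel-verified Lean document; each statement's English description precedes it below -/
import Mathlib

section
/- Let Σ₁ and Σ₂ be symmetric positive-definite n×n real matrices, Λ₁, Λ₂ diagonal n×n matrices with positive diagonal entries, and B a nonsingular n×n matrix with unit main diagonal such that Σ_m = B Λ_m Bᵀ for m = 1,2. Let ω_i = λ_{2,i}/λ_{1,i}. If the ω_i are pairwise distinct and the order of the entries of (ω_1,…,ω_n) is fixed, then B, Λ₁, Λ₂ are uniquely determined by Σ₁, Σ₂; i.e., if also Σ_m = B̃ Λ̃_m B̃ᵀ with B̃ unit-diagonal nonsingular, Λ̃_m positive diagonal, and the vector of ratios λ̃_{2,i}/λ̃_{1,i} equals (ω_1,…,ω_n) (same ordering), then B̃ = B, Λ̃₁ = Λ₁, Λ̃₂ = Λ₂. -/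
open Matrix

theorem stmt_0 {n : ℕ}
    (S₁ S₂ B B' : Matrix (Fin n) (Fin n) ℝ)
    (l₁ l₂ l₁' l₂' : Fin n → ℝ)
    (hS₁s : S₁.IsSymm) (hS₁p : S₁.PosDef)
    (hS₂s : S₂.IsSymm) (hS₂p : S₂.PosDef)
    (hl₁ : ∀ i, 0 < l₁ i) (hl₂ : ∀ i, 0 < l₂ i)
    (hB : IsUnit B.det) (hBd : ∀ i, B i i = 1)
    (h1 : S₁ = B * Matrix.diagonal l₁ * Bᵀ)
    (h2 : S₂ = B * Matrix.diagonal l₂ * Bᵀ)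
    (hdist : ∀ i j : Fin n, i ≠ j → l₂ i / l₁ i ≠ l₂ j / l₁ j)
    (hl₁' : ∀ i, 0 < l₁' i) (hl₂' : ∀ i, 0 < l₂' i)
    (hB' : IsUnit B'.det) (hBd' : ∀ i, B' i i = 1)
    (h1' : S₁ = B' * Matrix.diagonal l₁' * B'ᵀ)
    (h2' : S₂ = B' * Matrix.diagonal l₂' * B'ᵀ)
    (horder : ∀ i, l₂' i / l₁' i = l₂ i / l₁ i) :
    B' = B ∧ l₁' = l₁ ∧ l₂' = l₂ := by
  have hBT : IsUnit Bᵀ.det := by rwa [Matrix.det_transpose]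
  have hB'T : IsUnit B'ᵀ.det := by rwa [Matrix.det_transpose]
  set C := B⁻¹ * B' with hC
  set M := Bᵀ * B'ᵀ⁻¹ with hM
  have key : ∀ (S : Matrix (Fin n) (Fin n) ℝ) (l l' : Fin n → ℝ),
      S = B * Matrix.diagonal l * Bᵀ → S = B' * Matrix.diagonal l' * B'ᵀ →
      Matrix.diagonal l * M = C * Matrix.diagonal l' := by
    intro S l l' ha hb
    have h : B * Matrix.diagonal l * Bᵀ = B' * Matrix.diagonal l' * B'ᵀ := ha ▸ hb
    have h2 : B⁻¹ * (B * Matrix.diagonal l * Bᵀ) * B'ᵀ⁻¹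
        = B⁻¹ * (B' * Matrix.diagonal l' * B'ᵀ) * B'ᵀ⁻¹ := by rw [h]
    calc Matrix.diagonal l * M
        = B⁻¹ * (B * Matrix.diagonal l * Bᵀ) * B'ᵀ⁻¹ := by
          rw [hM, ← Matrix.mul_assoc, Matrix.mul_assoc B (Matrix.diagonal l) Bᵀ,
            Matrix.nonsing_inv_mul_cancel_left _ _ hB, Matrix.mul_assoc]
      _ = B⁻¹ * (B' * Matrix.diagonal l' * B'ᵀ) * B'ᵀ⁻¹ := h2
      _ = C * Matrix.diagonal l' := by
          rw [← Matrix.mul_assoc, Matrix.mul_nonsing_inv_cancel_right _ _ hB'T,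
            ← Matrix.mul_assoc, ← hC]
  have k1 := key S₁ l₁ l₁' h1 h1'
  have k2 := key S₂ l₂ l₂' h2 h2'
  have e1 : ∀ i j, l₁ i * M i j = C i j * l₁' j := by
    intro i j
    have := congrFun (congrFun k1 i) j
    simpa [Matrix.diagonal_mul, Matrix.mul_diagonal] using this
  have e2 : ∀ i j, l₂ i * M i j = C i j * l₂' j := by
    intro i j
    have := congrFun (congrFun k2 i) j
    simpa [Matrix.diagonal_mul, Matrix.mul_diagonal] using this
  have hoff : ∀ i j, i ≠ j → C i j = 0 := by
    intro i j hij
    by_contra hC0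
    have hx : l₂ i * (C i j * l₁' j) = l₁ i * (C i j * l₂' j) := by
      rw [← e1, ← e2]; ring
    have hx2 : l₂ i * l₁' j = l₁ i * l₂' j := by
      have := mul_left_cancel₀ hC0 (by linarith [hx] : C i j * (l₂ i * l₁' j) = C i j * (l₁ i * l₂' j))
      exact this
    have : l₂ i / l₁ i = l₂ j / l₁ j := by
      rw [← horder j]
      rw [div_eq_div_iff (hl₁ i).ne' (hl₁' j).ne']
      linarith [hx2]
    exact hdist i j hij this
  have hB'eq : B * C = B' := Matrix.mul_nonsing_inv_cancel_left B B' hB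
  have hdiag : ∀ i, C i i = 1 := by
    intro i
    have h := congrFun (congrFun hB'eq i) i
    rw [Matrix.mul_apply] at h
    rw [Finset.sum_eq_single i (fun k _ hk => by rw [hoff k i hk, mul_zero])
      (fun hk => absurd (Finset.mem_univ i) hk)] at h
    rw [hBd i, one_mul] at h
    rw [h, hBd' i]
  have hCone : C = 1 := by
    ext i j
    by_cases hij : i = j
    · subst hij; rw [hdiag i, Matrix.one_apply_eq]
    · rw [hoff i j hij, Matrix.one_apply_ne hij]
  have hBB : B' = B := by rw [← hB'eq, hCone, Matrix.mul_one]
  have hMone : M = 1 := by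
    rw [hM, hBB, Matrix.mul_nonsing_inv _ hBT]
  have hl1 : l₁' = l₁ := by
    have := k1
    rw [hCone, hMone, Matrix.mul_one, Matrix.one_mul] at this
    exact (Matrix.diagonal_injective this.symm)
  have hl2 : l₂' = l₂ := by
    have := k2
    rw [hCone, hMone, Matrix.mul_one, Matrix.one_mul] at this
    exact (Matrix.diagonal_injective this.symm)
  exact ⟨hBB, hl1, hl2⟩
end

section
/- Let Σ₁, Σ₂ be symmetric positive-definite n×n matrices admitting a joint decomposition Σ_m = B Λ_m Bᵀ with B unit-diagonal nonsingular and Λ_m positive diagonal, with pairwise distinct ratios ω_i = λ_{2,i}/λ_{1,i}. Then the set of all such decompositions (B', Λ'₁, Λ'₂) is in bijection with a subset of the symmetric group S_n; in particular there are at most n! such decompositions. -/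
open Matrix

private lemma cancel_aux {n : ℕ} {A X Y : Matrix (Fin n) (Fin n) ℝ} (hA : IsUnit A.det)
    (h : A * X * Aᵀ = A * Y * Aᵀ) : X = Y := by
  have hAT : IsUnit Aᵀ.det := by rwa [Matrix.det_transpose]
  have h2 : A * X = A * Y := by
    have := congrArg (fun M => M * Aᵀ⁻¹) h
    simpa [Matrix.mul_nonsing_inv_cancel_right _ _ hAT] using this
  have := congrArg (fun M => A⁻¹ * M) h2
  simpa [Matrix.nonsing_inv_mul_cancel_left _ _ hA] using this

private lemma aux_perm {n : ℕ} (B B' : Matrix (Fin n) (Fin n) ℝ) (l₁ l₂ m₁ m₂ : Fin n → ℝ)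
    (hB : IsUnit B.det) (hB' : IsUnit B'.det)
    (hl₁ : ∀ i, 0 < l₁ i) (hm₁ : ∀ i, 0 < m₁ i)
    (he1 : B * Matrix.diagonal l₁ * Bᵀ = B' * Matrix.diagonal m₁ * B'ᵀ)
    (he2 : B * Matrix.diagonal l₂ * Bᵀ = B' * Matrix.diagonal m₂ * B'ᵀ)
    (hdist : ∀ i j : Fin n, i ≠ j → l₂ i / l₁ i ≠ l₂ j / l₁ j) :
    ∃ τ : Fin n → Fin n, Function.Bijective τ ∧ ∀ i j, (B'⁻¹ * B) i j ≠ 0 ↔ j = τ i := by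
  classical
  set C : Matrix (Fin n) (Fin n) ℝ := B'⁻¹ * B with hCdef
  have hC : IsUnit C.det := by
    rw [hCdef, Matrix.det_mul]
    exact (B'.isUnit_nonsing_inv_det hB').mul hB
  have hCT : IsUnit Cᵀ.det := by rwa [Matrix.det_transpose]
  have hB'T : IsUnit B'ᵀ.det := by rwa [Matrix.det_transpose]
  -- C * Λ * Cᵀ = M for each pair
  have key : ∀ (l m : Fin n → ℝ),
      B * Matrix.diagonal l * Bᵀ = B' * Matrix.diagonal m * B'ᵀ →
      C * Matrix.diagonal l * Cᵀ = Matrix.diagonal m := by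
    intro l m he
    have h1 : C * Matrix.diagonal l * Cᵀ
        = B'⁻¹ * (B * Matrix.diagonal l * Bᵀ) * (B'ᵀ)⁻¹ := by
      rw [hCdef, Matrix.transpose_mul, Matrix.transpose_nonsing_inv]
      noncomm_ring
    rw [h1, he]
    calc B'⁻¹ * (B' * Matrix.diagonal m * B'ᵀ) * B'ᵀ⁻¹
        = B'⁻¹ * (B' * (Matrix.diagonal m * B'ᵀ * B'ᵀ⁻¹)) := by noncomm_ring
      _ = Matrix.diagonal m := by
          rw [Matrix.mul_nonsing_inv_cancel_right _ _ hB'T,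
            Matrix.nonsing_inv_mul_cancel_left _ _ hB']
  have hE1 := key l₁ m₁ he1
  have hE2 := key l₂ m₂ he2
  -- C * Λ = M * (Cᵀ)⁻¹
  have hrel : ∀ (l m : Fin n → ℝ), C * Matrix.diagonal l * Cᵀ = Matrix.diagonal m →
      ∀ i j, m i * (Cᵀ)⁻¹ i j = C i j * l j := by
    intro l m hE i j
    have : C * Matrix.diagonal l = Matrix.diagonal m * (Cᵀ)⁻¹ := by
      have := congrArg (fun M => M * (Cᵀ)⁻¹) hE
      simpa [Matrix.mul_nonsing_inv_cancel_right _ _ hCT] using this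
    have := congrFun (congrFun this.symm i) j
    simpa [Matrix.mul_diagonal, Matrix.diagonal_mul] using this
  have hr1 := hrel l₁ m₁ hE1
  have hr2 := hrel l₂ m₂ hE2
  -- ratio equality wherever C is nonzero
  have hkey : ∀ i j, C i j ≠ 0 → l₂ j / l₁ j = m₂ i / m₁ i := by
    intro i j hij
    have h1 := hr1 i j
    have h2 := hr2 i j
    have hl₁j := (hl₁ j).ne'
    have hm₁i := (hm₁ i).ne'
    have hD : (Cᵀ)⁻¹ i j ≠ 0 := by
      intro h0
      rw [h0, mul_zero] at h1
      exact hij (by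
        have := h1.symm
        rcases mul_eq_zero.mp this with h | h
        · exact h
        · exact absurd h hl₁j)
    -- m₂ i * l₁ j = m₁ i * l₂ j
    have hcross : m₂ i * (C i j * l₁ j) = m₁ i * (C i j * l₂ j) := by
      rw [← h1, ← h2]; ring
    have hcross2 : m₂ i * l₁ j = m₁ i * l₂ j := by
      have := mul_left_cancel₀ hij (by linarith [hcross] : C i j * (m₂ i * l₁ j) = C i j * (m₁ i * l₂ j))
      exact this
    field_simp
    linarith [hcross2]
  have hrow : ∀ i, ∃ j, C i j ≠ 0 := by
    intro i
    by_contra h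
    push_neg at h
    exact (hC.ne_zero) (Matrix.det_eq_zero_of_row_eq_zero i h)
  have hcol : ∀ j, ∃ i, C i j ≠ 0 := by
    intro j
    by_contra h
    push_neg at h
    exact (hC.ne_zero) (Matrix.det_eq_zero_of_column_eq_zero j h)
  have huniq : ∀ i j j', C i j ≠ 0 → C i j' ≠ 0 → j = j' := by
    intro i j j' hj hj'
    by_contra hne
    exact hdist j j' hne ((hkey i j hj).trans (hkey i j' hj').symm)
  refine ⟨fun i => (hrow i).choose, ?_, ?_⟩
  · apply Function.Surjective.bijective_of_finite
    intro j
    obtain ⟨i, hi⟩ := hcol j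
    exact ⟨i, huniq i _ j (hrow i).choose_spec hi⟩
  · intro i j
    constructor
    · intro hj
      exact huniq i j _ hj (hrow i).choose_spec
    · rintro rfl
      exact (hrow i).choose_spec

private lemma aux_recover {n : ℕ} (B B' : Matrix (Fin n) (Fin n) ℝ)
    (hB' : IsUnit B'.det) (hBd' : ∀ i, B' i i = 1) (τ : Fin n → Fin n)
    (hτinj : Function.Injective τ)
    (hchar : ∀ i j, (B'⁻¹ * B) i j ≠ 0 ↔ j = τ i) :
    ∀ i k, B' i k = B i (τ k) / B k (τ k) := by
  classical
  intro i k
  set C : Matrix (Fin n) (Fin n) ℝ := B'⁻¹ * B with hCdef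
  have hBC : B' * C = B := by
    rw [hCdef, ← Matrix.mul_assoc, Matrix.mul_nonsing_inv _ hB', Matrix.one_mul]
  have hentry : ∀ i', B i' (τ k) = B' i' k * C k (τ k) := by
    intro i'
    have : B i' (τ k) = ∑ m, B' i' m * C m (τ k) := by
      rw [← hBC]; rfl
    rw [this]
    apply Finset.sum_eq_single k
    · intro m _ hm
      have : C m (τ k) = 0 := by
        by_contra h
        exact hm (hτinj ((hchar m (τ k)).mp h).symm)
      rw [this, mul_zero]
    · intro h; exact absurd (Finset.mem_univ k) h
  have hc : C k (τ k) ≠ 0 := (hchar k (τ k)).mpr rfl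
  have hk := hentry k
  rw [hBd' k, one_mul] at hk
  rw [hentry i, hk, mul_div_cancel_right₀ _ (hk ▸ hc)]

theorem stmt_9 {n : ℕ}
    (S₁ S₂ B : Matrix (Fin n) (Fin n) ℝ) (l₁ l₂ : Fin n → ℝ)
    (hS₁s : S₁.IsSymm) (hS₁p : S₁.PosDef) (hS₂s : S₂.IsSymm) (hS₂p : S₂.PosDef)
    (hB : IsUnit B.det) (hBd : ∀ i, B i i = 1)
    (hl₁ : ∀ i, 0 < l₁ i) (hl₂ : ∀ i, 0 < l₂ i)
    (h1 : S₁ = B * Matrix.diagonal l₁ * Bᵀ)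
    (h2 : S₂ = B * Matrix.diagonal l₂ * Bᵀ)
    (hdist : ∀ i j : Fin n, i ≠ j → l₂ i / l₁ i ≠ l₂ j / l₁ j) :
    ∃ f : {Bl : Matrix (Fin n) (Fin n) ℝ × (Fin n → ℝ) × (Fin n → ℝ) //
        IsUnit Bl.1.det ∧ (∀ i, Bl.1 i i = 1) ∧
        (∀ i, 0 < Bl.2.1 i) ∧ (∀ i, 0 < Bl.2.2 i) ∧
        S₁ = Bl.1 * Matrix.diagonal Bl.2.1 * Bl.1ᵀ ∧
        S₂ = Bl.1 * Matrix.diagonal Bl.2.2 * Bl.1ᵀ} → Equiv.Perm (Fin n),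
      Function.Injective f := by
  classical
  have H : ∀ d : {Bl : Matrix (Fin n) (Fin n) ℝ × (Fin n → ℝ) × (Fin n → ℝ) //
        IsUnit Bl.1.det ∧ (∀ i, Bl.1 i i = 1) ∧
        (∀ i, 0 < Bl.2.1 i) ∧ (∀ i, 0 < Bl.2.2 i) ∧
        S₁ = Bl.1 * Matrix.diagonal Bl.2.1 * Bl.1ᵀ ∧
        S₂ = Bl.1 * Matrix.diagonal Bl.2.2 * Bl.1ᵀ},
      ∃ τ : Fin n → Fin n, Function.Bijective τ ∧
        ∀ i j, (d.1.1⁻¹ * B) i j ≠ 0 ↔ j = τ i := by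
    intro d
    obtain ⟨hB', hBd', hm₁, hm₂, he1, he2⟩ := d.2
    exact aux_perm B d.1.1 l₁ l₂ d.1.2.1 d.1.2.2 hB hB' hl₁ hm₁
      (h1.symm.trans he1) (h2.symm.trans he2) hdist
  choose τ hbij hchar using H
  refine ⟨fun d => Equiv.ofBijective (τ d) (hbij d), ?_⟩
  intro d d' hdd
  have hτ : τ d = τ d' := by
    funext i
    exact congrArg (fun e => e i) hdd
  obtain ⟨hB'1, hBd'1, hm₁1, hm₂1, he11, he21⟩ := d.2
  obtain ⟨hB'2, hBd'2, hm₁2, hm₂2, he12, he22⟩ := d'.2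
  have hrec1 := aux_recover B d.1.1 hB'1 hBd'1 (τ d) (hbij d).injective (hchar d)
  have hrec2 := aux_recover B d'.1.1 hB'2 hBd'2 (τ d') (hbij d').injective (hchar d')
  have hBeq : d.1.1 = d'.1.1 := by
    funext i k
    rw [hrec1 i k, hrec2 i k, hτ]
  have hM1 : d.1.2.1 = d'.1.2.1 := by
    have hd : Matrix.diagonal d.1.2.1 = Matrix.diagonal d'.1.2.1 := by
      apply cancel_aux hB'1
      rw [← he11, hBeq, ← he12]
    funext i
    have := congrFun (congrFun hd i) i
    simpa using this
  have hM2 : d.1.2.2 = d'.1.2.2 := by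
    have hd : Matrix.diagonal d.1.2.2 = Matrix.diagonal d'.1.2.2 := by
      apply cancel_aux hB'1
      rw [← he21, hBeq, ← he22]
    funext i
    have := congrFun (congrFun hd i) i
    simpa using this
  apply Subtype.ext
  exact Prod.ext hBeq (Prod.ext hM1 hM2)
end

section
/- Let α and β̃ be n×r real matrices of full column rank r < n, and let α⊥, β⊥ be n×(n−r) full-column-rank matrices with αᵀα⊥ = 0 and β̃ᵀβ⊥ = 0. Suppose the (n−r)×(n−r) matrix α⊥ᵀ Γ β⊥ is invertible for a given n×n matrix Γ. Then Ξ = β⊥(α⊥ᵀ Γ β⊥)⁻¹ α⊥ᵀ satisfies: (i) rank(Ξ) = n−r; (ii) Ξ α = 0; (iii) β̃ᵀ Ξ = 0; (iv) Ξ Γ Ξ = Ξ (Ξ is idempotent with respect to Γ). -/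
open Matrix

theorem stmt_14 {n r : ℕ} (hrn : r < n)
    (α β : Matrix (Fin n) (Fin r) ℝ)
    (αp βp : Matrix (Fin n) (Fin (n - r)) ℝ)
    (Γ : Matrix (Fin n) (Fin n) ℝ)
    (hα : α.rank = r) (hβ : β.rank = r)
    (hαp : αp.rank = n - r) (hβp : βp.rank = n - r)
    (hoα : αᵀ * αp = 0) (hoβ : βᵀ * βp = 0)
    (hinv : IsUnit (αpᵀ * Γ * βp).det) :
    let Ξ : Matrix (Fin n) (Fin n) ℝ := βp * (αpᵀ * Γ * βp)⁻¹ * αpᵀ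
    Ξ.rank = n - r ∧ Ξ * α = 0 ∧ βᵀ * Ξ = 0 ∧ Ξ * Γ * Ξ = Ξ := by
  intro Ξ
  set M := αpᵀ * Γ * βp with hM
  have hMinv : M⁻¹ * M = 1 := Matrix.nonsing_inv_mul M hinv
  have hΓΞ : Ξ * Γ * βp = βp := by
    show βp * M⁻¹ * αpᵀ * Γ * βp = βp
    calc βp * M⁻¹ * αpᵀ * Γ * βp = βp * (M⁻¹ * M) := by
          rw [hM]; simp only [Matrix.mul_assoc]
      _ = βp := by rw [hMinv, Matrix.mul_one]
  refine ⟨?_, ?_, ?_, ?_⟩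
  · refine le_antisymm ?_ ?_
    · calc Ξ.rank ≤ (βp * M⁻¹).rank := Matrix.rank_mul_le_left _ _
        _ ≤ βp.rank := Matrix.rank_mul_le_left _ _
        _ = n - r := hβp
    · calc (n - r : ℕ) = βp.rank := hβp.symm
        _ = (Ξ * (Γ * βp)).rank := by rw [← Matrix.mul_assoc, hΓΞ]
        _ ≤ Ξ.rank := Matrix.rank_mul_le_left _ _
  · have h : αpᵀ * α = 0 := by
      have := congrArg Matrix.transpose hoα
      simpa using this
    show βp * M⁻¹ * αpᵀ * α = 0
    rw [Matrix.mul_assoc, h, Matrix.mul_zero]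
  · show βᵀ * (βp * M⁻¹ * αpᵀ) = 0
    rw [← Matrix.mul_assoc, ← Matrix.mul_assoc, hoβ, Matrix.zero_mul, Matrix.zero_mul]
  · show Ξ * Γ * Ξ = Ξ
    calc Ξ * Γ * Ξ = (Ξ * Γ * βp) * M⁻¹ * αpᵀ := by
          show Ξ * Γ * (βp * M⁻¹ * αpᵀ) = _
          simp only [Matrix.mul_assoc]
      _ = Ξ := by rw [hΓΞ]
end
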